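/- Let V be a real vector space, F : V → V a linear map, and v ∈ V. If the bracket [ψ,φ]_{F,v} = φ(v)·F*(ψ) − ψ(v)·F*(φ) satisfies the Jacobi identity for all ψ, φ, ζ ∈ V*, then one of the following holds: (1) v is an eigenvector of F, i.e. there exists λ ∈ ℝ with F(v) = λ·v; or (2) there exist ρ, η ∈ V* such that F*(ψ) = ψ(v)·ρ + ψ(F(v))·η for all ψ ∈ V*. -/

import Mathlib

/-!
The Jacobiator of `[·,·]_{F,v}` at `(ψ, φ, ζ)` is the cyclic sum of
`(ψ(v) φ(Fv) − φ(v) ψ(Fv)) • F*ζ`. If `v` is not an eigenvector, then `v` and `Fv` are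
linearly independent, so some `ψ, φ ∈ V*` are dual to them; the Jacobi identity at `(ψ, φ, ζ)`
then reads `F*ζ = ζ(v) • F*ψ + ζ(Fv) • F*φ`.
-/

/-- The bracket on the dual space `V*` associated with a linear map `F : V → V` and a
vector `v ∈ V`: `[ψ,φ]_{F,v} = φ(v)·F*(ψ) − ψ(v)·F*(φ)`. -/
noncomputable def dualBracket {V : Type*} [AddCommGroup V] [Module ℝ V]
    (F : V →ₗ[ℝ] V) (v : V) (ψ φ : Module.Dual ℝ V) : Module.Dual ℝ V :=
  φ v • F.dualMap ψ - ψ v • F.dualMap φ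

theorem LinearIndependent.exists_linearMap_apply_eq_single {ι K V : Type*} [Fintype ι]
    [DecidableEq ι] [Field K] [AddCommGroup V] [Module K V] {b : ι → V}
    (hb : LinearIndependent K b) :
    ∃ g : V →ₗ[K] ι → K, ∀ i, g (b i) = Pi.single i 1 := by
  obtain ⟨g, hg⟩ := (Fintype.linearCombination K b).exists_leftInverse_of_injective
    (LinearMap.ker_eq_bot.mpr hb.fintypeLinearCombination_injective)
  refine ⟨g, fun i => ?_⟩
  simpa [Fintype.linearCombination_apply_single] using LinearMap.congr_fun hg (Pi.single i 1)

theorem LinearMap.linearIndependent_self_apply {K V : Type*} [Field K] [AddCommGroup V]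
    [Module K V] {f : V →ₗ[K] V} {v : V} (h : ¬ ∃ a : K, f v = a • v) :
    LinearIndependent K ![v, f v] := by
  have hv : v ≠ 0 := by
    rintro rfl
    exact h ⟨0, by simp⟩
  rw [LinearIndependent.pair_iff' hv]
  exact fun a ha => h ⟨a, ha.symm⟩

section
variable {V : Type*} [AddCommGroup V] [Module ℝ V] (F : V →ₗ[ℝ] V) (v : V)

theorem dualBracket_jacobiator (ψ φ ζ : Module.Dual ℝ V) :
    dualBracket F v (dualBracket F v ψ φ) ζ + dualBracket F v (dualBracket F v ζ ψ) φ +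
        dualBracket F v (dualBracket F v φ ζ) ψ =
      (ψ v * φ (F v) - φ v * ψ (F v)) • F.dualMap ζ +
        (ζ v * ψ (F v) - ψ v * ζ (F v)) • F.dualMap φ +
        (φ v * ζ (F v) - ζ v * φ (F v)) • F.dualMap ψ := by
  simp only [dualBracket, map_sub, map_smul, LinearMap.sub_apply, LinearMap.smul_apply,
    smul_eq_mul, LinearMap.dualMap_apply]
  module

variable {F v}

theorem dualMap_eq_of_dualBracket_jacobi
    (hJ : ∀ ψ φ ζ : Module.Dual ℝ V,
        dualBracket F v (dualBracket F v ψ φ) ζ +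
          dualBracket F v (dualBracket F v ζ ψ) φ +
          dualBracket F v (dualBracket F v φ ζ) ψ = 0)
    {ψ φ : Module.Dual ℝ V} (hψv : ψ v = 1) (hψFv : ψ (F v) = 0) (hφv : φ v = 0)
    (hφFv : φ (F v) = 1) (ζ : Module.Dual ℝ V) :
    F.dualMap ζ = ζ v • F.dualMap ψ + ζ (F v) • F.dualMap φ := by
  have h := dualBracket_jacobiator F v ψ φ ζ
  rw [hJ, hψv, hψFv, hφv, hφFv] at h
  linear_combination (norm := module) -h

end

/-- If the bracket `[·,·]_{F,v}` satisfies the Jacobi identity, then either `v` is an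
eigenvector of `F`, or `F* = ι_v ⊗ ρ + ι_{Fv} ⊗ η` for some `ρ, η ∈ V*`. -/
theorem dualBracket_jacobi_dichotomy {V : Type*} [AddCommGroup V] [Module ℝ V]
    (F : V →ₗ[ℝ] V) (v : V)
    (hJ : ∀ ψ φ ζ : Module.Dual ℝ V,
        dualBracket F v (dualBracket F v ψ φ) ζ +
          dualBracket F v (dualBracket F v ζ ψ) φ +
          dualBracket F v (dualBracket F v φ ζ) ψ = 0) :
    (∃ lam : ℝ, F v = lam • v) ∨
    (∃ ρ η : Module.Dual ℝ V, ∀ ψ : Module.Dual ℝ V,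
        F.dualMap ψ = ψ v • ρ + ψ (F v) • η) := by
  by_cases hev : ∃ lam : ℝ, F v = lam • v
  · exact Or.inl hev
  obtain ⟨g, hg⟩ := (LinearMap.linearIndependent_self_apply hev).exists_linearMap_apply_eq_single
  have hgv : g v = Pi.single 0 1 := hg 0
  have hgFv : g (F v) = Pi.single 1 1 := hg 1
  let coord (i : Fin 2) : Module.Dual ℝ V := LinearMap.proj i ∘ₗ g
  exact Or.inr ⟨F.dualMap (coord 0), F.dualMap (coord 1),
    dualMap_eq_of_dualBracket_jacobi hJ (by simp [coord, hgv]) (by simp [coord, hgFv])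
      (by simp [coord, hgv]) (by simp [coord, hgFv])⟩
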